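/- arXiv:2506.09687 — 3 statements merged into one kernel-verified Lean document; each statement's English description precedes it below -/
import Mathlib

section
/- Let 𝒳 = span{X_1, …, X_k} ⊂ 𝔽^{n×n} (𝔽 = ℝ or ℂ) be a k-dimensional subspace, Y ∈ 𝔽^{n×n} \ 𝒳, and X_* ∈ 𝒳. Define A_i = (Y − X_*)ᴴ X_i for i = 1, …, k, A_Y = (Y − X_*)ᴴ Y, and ϱ = ‖Y − X_*‖₂². Then the zero vector of 𝔽^k lies in the convex hull of 𝓕(A_1, …, A_k; Σ_{Y−X_*}) if and only if ϱ·e_1 lies in the convex hull of 𝓕(A_Y, A_1, …, A_k), where e_1 is the first standard basis vector of 𝔽^{k+1}. -/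
open Matrix

variable {𝕜 : Type*} [RCLike 𝕜]

/-- The spectral norm (matrix 2-norm): the supremum of `‖A v‖₂` over unit Euclidean
norm vectors `v`. -/
noncomputable def specNorm {m : Type*} [Fintype m] [DecidableEq m]
    (A : Matrix m m 𝕜) : ℝ :=
  sSup {r : ℝ | ∃ v : EuclideanSpace 𝕜 m, ‖v‖ = 1 ∧ r = ‖Matrix.toEuclideanLin A v‖}

/-- `Xs` is a spectral (best) approximation of `Y` from the subspace `𝒳`. -/
def IsSpectralApprox {m : Type*} [Fintype m] [DecidableEq m]
    (𝒳 : Submodule 𝕜 (Matrix m m 𝕜)) (Y Xs : Matrix m m 𝕜) : Prop :=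
  Xs ∈ 𝒳 ∧ ∀ X ∈ 𝒳, specNorm (Y - Xs) ≤ specNorm (Y - X)

/-- The span of the maximal right singular vectors of `M`. -/
noncomputable def maxRSV {m : Type*} [Fintype m] [DecidableEq m]
    (M : Matrix m m 𝕜) : Submodule 𝕜 (EuclideanSpace 𝕜 m) :=
  Submodule.span 𝕜 {v : EuclideanSpace 𝕜 m | ‖v‖ = 1 ∧ ‖Matrix.toEuclideanLin M v‖ = specNorm M}

/-- The `k`-dimensional field of the `k` matrices `A 0, …, A (k-1)` restricted to
the subspace `S`. -/
def kField {m : Type*} [Fintype m] [DecidableEq m] {k : ℕ}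
    (A : Fin k → Matrix m m 𝕜) (S : Submodule 𝕜 (EuclideanSpace 𝕜 m)) : Set (Fin k → 𝕜) :=
  {w | ∃ v : EuclideanSpace 𝕜 m, v ∈ S ∧ ‖v‖ = 1 ∧
     w = fun i => (inner 𝕜 v (Matrix.toEuclideanLin (A i) v) : 𝕜)}

/-- min-max value -/
noncomputable def minMaxVal {m : Type*} [Fintype m] [DecidableEq m]
    (𝒳 : Submodule 𝕜 (Matrix m m 𝕜)) (Y : Matrix m m 𝕜) : ℝ :=
  sInf {r : ℝ | ∃ X ∈ 𝒳, r = specNorm (Y - X)}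

/-- max-min value -/
noncomputable def maxMinVal {m : Type*} [Fintype m] [DecidableEq m]
    (𝒳 : Submodule 𝕜 (Matrix m m 𝕜)) (Y : Matrix m m 𝕜) : ℝ :=
  sSup {r : ℝ | ∃ v : EuclideanSpace 𝕜 m, ‖v‖ = 1 ∧
    r = sInf {s : ℝ | ∃ X ∈ 𝒳, s = ‖Matrix.toEuclideanLin (Y - X) v‖}}

/-- dual norm of a linear functional w.r.t. the spectral norm -/
noncomputable def dualNorm {m : Type*} [Fintype m] [DecidableEq m]
    (f : Matrix m m 𝕜 →ₗ[𝕜] 𝕜) : ℝ :=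
  sSup {r : ℝ | ∃ A : Matrix m m 𝕜, specNorm A = 1 ∧ r = ‖f A‖}

/-- the rank one matrix `u vᴴ` -/
def outer {m : Type*} (u v : EuclideanSpace 𝕜 m) : Matrix m m 𝕜 :=
  Matrix.of fun i j => u i * star (v j)

/-- nuclear (Schatten 1) norm: the sum of the singular values -/
noncomputable def nuclearNorm {m : Type*} [Fintype m] [DecidableEq m]
    (F : Matrix m m 𝕜) : ℝ :=
  ∑ i, Real.sqrt ((Matrix.isHermitian_conjTranspose_mul_self F).eigenvalues i)

/-!
Write `X_* = ∑ c_q X_q` and `M = Y - X_*`. Then `vᴴ A_Y v = ‖M v‖² + ∑ c_q vᴴ A_q v`, so every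
point `p` of `𝓕(A_Y, A_1, …, A_k)` satisfies `re (p_0 - ∑ c_q p_q) = ‖M v‖² ≤ ϱ`, with equality
exactly at the unit maximal right singular vectors (their span is still inside the eigenspace of
`MᴴM` for `ϱ`). So `ϱ e_1`, which lies on this supporting hyperplane, is in the convex hull of the
field iff it is in the convex hull of the face, and the face is the image of
`𝓕(A_1, …, A_k; Σ_{Y-X_*})` under the injective affine map `z ↦ (ϱ + ∑ c_q z_q, z)`, which sends
`0` to `ϱ e_1`.
-/

theorem mem_convexHull_sep_of_forall_le {R E : Type*} [Field R] [LinearOrder R]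
    [IsStrictOrderedRing R] [AddCommGroup E] [Module R E] (ℓ : E →ₗ[R] R) {s : Set E} {r : R}
    (hs : ∀ x ∈ s, ℓ x ≤ r) {p : E} (hp : p ∈ convexHull R s) (hpr : ℓ p = r) :
    p ∈ convexHull R {x ∈ s | ℓ x = r} := by
  set F := convexHull R {x ∈ s | ℓ x = r}
  have hF : ∀ x ∈ F, ℓ x = r :=
    convexHull_min (fun x hx => hx.2) (convex_hyperplane ℓ.isLinear r)
  -- Mixing in a point strictly below the level `r` stays strictly below it.
  have hD : Convex R ({x | ℓ x < r} ∪ F) := by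
    have hle : ∀ x ∈ {x | ℓ x < r} ∪ F, ℓ x ≤ r := by
      rintro x (hx | hx)
      exacts [le_of_lt hx, (hF x hx).le]
    intro x hx y hy a b ha hb hab
    by_cases hxy : x ∈ F ∧ y ∈ F
    · exact Or.inr (convex_convexHull R _ hxy.1 hxy.2 ha hb hab)
    rcases ha.eq_or_lt with rfl | ha
    · rw [zero_add] at hab
      simpa [hab] using hy
    rcases hb.eq_or_lt with rfl | hb
    · rw [add_zero] at hab
      simpa [hab] using hx
    left
    have hlt : ℓ x < r ∨ ℓ y < r := by
      rcases not_and_or.mp hxy with h | h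
      · exact Or.inl (hx.resolve_right h)
      · exact Or.inr (hy.resolve_right h)
    have hr : r = a * r + b * r := by rw [← add_mul, hab, one_mul]
    show ℓ (a • x + b • y) < r
    rw [map_add, map_smul, map_smul, smul_eq_mul, smul_eq_mul, hr]
    rcases hlt with h | h
    · exact add_lt_add_of_lt_of_le (by gcongr) (by gcongr; exact hle y hy)
    · exact add_lt_add_of_le_of_lt (by gcongr; exact hle x hx) (by gcongr)
  have hsD : s ⊆ {x | ℓ x < r} ∪ F := fun x hx =>
    (hs x hx).lt_or_eq.imp id fun h => subset_convexHull R _ ⟨hx, h⟩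
  exact (convexHull_min hsD hD hp).resolve_left hpr.not_lt

def affineGraph {k : ℕ} (c : Fin k → 𝕜) (r : 𝕜) : (Fin k → 𝕜) →ᵃ[ℝ] (Fin (k + 1) → 𝕜) where
  toFun z := Fin.cons (r + ∑ q, c q * z q) z
  linear :=
    { toFun := fun z => Fin.cons (∑ q, c q * z q) z
      map_add' := fun z w => by
        ext i; cases i using Fin.cases <;> simp [mul_add, Finset.sum_add_distrib]
      map_smul' := fun a z => by
        ext i; cases i using Fin.cases <;> simp [Finset.smul_sum] }
  map_vadd' z w := by
    ext i; cases i using Fin.cases <;> simp [mul_add, Finset.sum_add_distrib]; ring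

theorem affineGraph_injective {k : ℕ} (c : Fin k → 𝕜) (r : 𝕜) :
    Function.Injective (affineGraph c r) :=
  fun z w h => by simpa [affineGraph] using congrArg Fin.tail h

theorem cons_mem_convexHull_image_iff {V : Type*} {k : ℕ} (c : Fin k → 𝕜)
    (f : V → Fin k → 𝕜) (g : V → ℝ) {U : Set V} {r : ℝ} (hg : ∀ v ∈ U, g v ≤ r) :
    (Fin.cons (r : 𝕜) 0 : Fin (k + 1) → 𝕜) ∈
        convexHull ℝ ((fun v => Fin.cons ((g v : 𝕜) + ∑ q, c q * f v q) (f v)) '' U) ↔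
      0 ∈ convexHull ℝ (f '' {v ∈ U | g v = r}) := by
  set F : V → Fin (k + 1) → 𝕜 := fun v => Fin.cons ((g v : 𝕜) + ∑ q, c q * f v q) (f v)
  let ℓ : (Fin (k + 1) → 𝕜) →ₗ[ℝ] ℝ :=
    { toFun := fun p => RCLike.re (p 0 - ∑ q, c q * p q.succ)
      map_add' := fun p p' => by simp [mul_add, Finset.sum_add_distrib]; ring
      map_smul' := fun a p => by
        simp only [Pi.smul_apply, mul_smul_comm, ← Finset.smul_sum, ← smul_sub, RCLike.smul_re,
          smul_eq_mul, RingHom.id_apply] }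
  have hℓ : ∀ v, ℓ (F v) = g v := fun v => by simp [ℓ, F]
  have hgraph : ∀ v, g v = r → F v = affineGraph c (r : 𝕜) (f v) := fun v hv => by
    simp [F, affineGraph, hv]
  have hface : {p ∈ F '' U | ℓ p = r} = affineGraph c (r : 𝕜) '' (f '' {v ∈ U | g v = r}) := by
    ext p
    constructor
    · rintro ⟨⟨v, hv, rfl⟩, hvr⟩
      rw [hℓ] at hvr
      exact ⟨f v, ⟨v, ⟨hv, hvr⟩, rfl⟩, (hgraph v hvr).symm⟩
    · rintro ⟨_, ⟨v, ⟨hv, hvr⟩, rfl⟩, rfl⟩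
      rw [← hgraph v hvr]
      exact ⟨⟨v, hv, rfl⟩, (hℓ v).trans hvr⟩
  have hr : affineGraph c (r : 𝕜) 0 = Fin.cons (r : 𝕜) 0 := by simp [affineGraph]
  rw [← hr, ← (affineGraph_injective c r).mem_set_image, AffineMap.image_convexHull, ← hface]
  refine ⟨fun hp => mem_convexHull_sep_of_forall_le ℓ ?_ hp (by simp [hr, ℓ]),
    fun hp => convexHull_mono (fun p hp => hp.1) hp⟩
  rintro _ ⟨v, hv, rfl⟩
  rw [hℓ]
  exact hg v hv

section

open scoped ComplexOrder

variable {m : Type*} [Fintype m] [DecidableEq m]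

theorem specNorm_eq_norm_toEuclideanCLM (A : Matrix m m 𝕜) :
    specNorm A = ‖Matrix.toEuclideanCLM (n := m) (𝕜 := 𝕜) A‖ := by
  rw [specNorm, ← ContinuousLinearMap.sSup_sphere_eq_norm]
  congr 1
  ext r
  exact exists_congr fun v => and_congr mem_sphere_zero_iff_norm.symm eq_comm

theorem specNorm_nonneg (A : Matrix m m 𝕜) : 0 ≤ specNorm A :=
  specNorm_eq_norm_toEuclideanCLM A ▸ norm_nonneg _

theorem norm_toEuclideanLin_le (A : Matrix m m 𝕜) (v : EuclideanSpace 𝕜 m) :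
    ‖toEuclideanLin A v‖ ≤ specNorm A * ‖v‖ :=
  specNorm_eq_norm_toEuclideanCLM A ▸ (Matrix.toEuclideanCLM (n := m) (𝕜 := 𝕜) A).le_opNorm v

theorem inner_toEuclideanLin_conjTranspose_mul (A B : Matrix m m 𝕜) (v w : EuclideanSpace 𝕜 m) :
    inner 𝕜 v (toEuclideanLin (Aᴴ * B) w) = inner 𝕜 (toEuclideanLin A v) (toEuclideanLin B w) := by
  change inner 𝕜 v (toEuclideanCLM (n := m) (𝕜 := 𝕜) (Aᴴ * B) w) =
    inner 𝕜 (toEuclideanCLM (n := m) (𝕜 := 𝕜) A v) (toEuclideanCLM (n := m) (𝕜 := 𝕜) B w)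
  rw [map_mul, ← star_eq_conjTranspose, map_star, ContinuousLinearMap.star_eq_adjoint,
    mul_apply_eq_comp, ContinuousLinearMap.adjoint_inner_right]

theorem norm_toEuclideanLin_sq_le (A : Matrix m m 𝕜) (v : EuclideanSpace 𝕜 m) :
    ‖toEuclideanLin A v‖ ^ 2 ≤ specNorm A ^ 2 * ‖v‖ ^ 2 := by
  rw [← mul_pow]
  exact pow_le_pow_left₀ (norm_nonneg _) (norm_toEuclideanLin_le A v) 2

theorem inner_toEuclideanLin_sq_smul_one_sub (M : Matrix m m 𝕜) (r : ℝ) (v : EuclideanSpace 𝕜 m) :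
    inner 𝕜 v (toEuclideanLin (((r ^ 2 : ℝ) : 𝕜) • 1 - Mᴴ * M) v) =
      ((r ^ 2 * ‖v‖ ^ 2 - ‖toEuclideanLin M v‖ ^ 2 : ℝ) : 𝕜) := by
  have hone : toEuclideanLin (1 : Matrix m m 𝕜) v = v := by simp
  rw [map_sub, LinearMap.sub_apply, inner_sub_right, inner_toEuclideanLin_conjTranspose_mul,
    _root_.map_smul, LinearMap.smul_apply, hone, inner_smul_right, inner_self_eq_norm_sq_to_K,
    inner_self_eq_norm_sq_to_K]
  push_cast
  ring

theorem posSemidef_specNorm_sq_smul_one_sub (M : Matrix m m 𝕜) :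
    (((specNorm M ^ 2 : ℝ) : 𝕜) • 1 - Mᴴ * M).PosSemidef := by
  refine posSemidef_iff_dotProduct_mulVec.mpr ⟨?_, fun x => ?_⟩
  · simp [IsHermitian, conjTranspose_sub, conjTranspose_smul]
  · have hx : star x ⬝ᵥ (((specNorm M ^ 2 : ℝ) : 𝕜) • 1 - Mᴴ * M) *ᵥ x = _ :=
      (dotProduct_comm _ _).trans (inner_toEuclideanLin_sq_smul_one_sub M _ (WithLp.toLp 2 x))
    rw [hx, RCLike.ofReal_nonneg, sub_nonneg]
    exact norm_toEuclideanLin_sq_le M _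

theorem norm_toEuclideanLin_eq_of_mem_maxRSV (M : Matrix m m 𝕜) {v : EuclideanSpace 𝕜 m}
    (hv : v ∈ maxRSV M) : ‖toEuclideanLin M v‖ = specNorm M * ‖v‖ := by
  set B := ((specNorm M ^ 2 : ℝ) : 𝕜) • 1 - Mᴴ * M
  -- A maximal right singular vector annihilates the quadratic form of the positive
  -- semidefinite `B`, hence lies in its kernel; so does their span.
  have hker : maxRSV M ≤ LinearMap.ker (toEuclideanLin B) := by
    refine Submodule.span_le.mpr fun w ⟨hw1, hw2⟩ => ?_
    have hw : star (WithLp.ofLp w) ⬝ᵥ B *ᵥ WithLp.ofLp w = 0 := by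
      have h := inner_toEuclideanLin_sq_smul_one_sub M (specNorm M) w
      rw [hw1, hw2, one_pow, mul_one, sub_self, RCLike.ofReal_zero] at h
      exact (dotProduct_comm _ _).trans h
    change WithLp.toLp 2 (B *ᵥ WithLp.ofLp w) = 0
    rw [(posSemidef_specNorm_sq_smul_one_sub M).dotProduct_mulVec_zero_iff _ |>.mp hw,
      WithLp.toLp_zero]
  have h0 := inner_toEuclideanLin_sq_smul_one_sub M (specNorm M) v
  rw [LinearMap.mem_ker.mp (hker hv), inner_zero_right, eq_comm, RCLike.ofReal_eq_zero,
    sub_eq_zero, ← mul_pow] at h0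
  exact (sq_eq_sq₀ (norm_nonneg _) (mul_nonneg (specNorm_nonneg M) (norm_nonneg v))).mp h0.symm

theorem mem_maxRSV_iff (M : Matrix m m 𝕜) {v : EuclideanSpace 𝕜 m} (hv : ‖v‖ = 1) :
    v ∈ maxRSV M ↔ ‖toEuclideanLin M v‖ = specNorm M := by
  refine ⟨fun h => ?_, fun h => Submodule.subset_span ⟨hv, h⟩⟩
  rw [norm_toEuclideanLin_eq_of_mem_maxRSV M h, hv, mul_one]

theorem kField_eq_image {k : ℕ} (A : Fin k → Matrix m m 𝕜)
    (S : Submodule 𝕜 (EuclideanSpace 𝕜 m)) :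
    kField A S = (fun v i => inner 𝕜 v (toEuclideanLin (A i) v)) '' {v | v ∈ S ∧ ‖v‖ = 1} := by
  ext w
  exact exists_congr fun v => and_assoc.symm.trans (and_congr_right' eq_comm)

theorem kField_cons_eq_image {k : ℕ} (B : Matrix m m 𝕜) (A : Fin k → Matrix m m 𝕜)
    (S : Submodule 𝕜 (EuclideanSpace 𝕜 m)) :
    kField (Fin.cons B A) S = (fun v => Fin.cons (inner 𝕜 v (toEuclideanLin B v))
      fun i => inner 𝕜 v (toEuclideanLin (A i) v)) '' {v | v ∈ S ∧ ‖v‖ = 1} := by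
  rw [kField_eq_image]
  congr 1
  ext v i
  cases i using Fin.cases <;> rfl

theorem inner_toEuclideanLin_conjTranspose_mul_add_sum {k : ℕ} (M : Matrix m m 𝕜)
    (X : Fin k → Matrix m m 𝕜) (c : Fin k → 𝕜) (v : EuclideanSpace 𝕜 m) :
    inner 𝕜 v (toEuclideanLin (Mᴴ * (M + ∑ q, c q • X q)) v) =
      ((‖toEuclideanLin M v‖ ^ 2 : ℝ) : 𝕜) + ∑ q, c q * inner 𝕜 v (toEuclideanLin (Mᴴ * X q) v) := by
  rw [Matrix.mul_add, map_add, LinearMap.add_apply, inner_add_right,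
    inner_toEuclideanLin_conjTranspose_mul, inner_self_eq_norm_sq_to_K]
  simp [Matrix.mul_sum, inner_sum, inner_smul_right]

end

theorem stmt6_general {n k : ℕ} (X : Fin k → Matrix (Fin n) (Fin n) 𝕜)
    (Y Xs : Matrix (Fin n) (Fin n) 𝕜)
    (hXs : Xs ∈ Submodule.span 𝕜 (Set.range X)) :
    ((0 : Fin k → 𝕜) ∈
        convexHull ℝ (kField (fun i => (Y - Xs)ᴴ * X i) (maxRSV (Y - Xs)))) ↔
      (fun i : Fin (k + 1) => if i = 0 then ((specNorm (Y - Xs) ^ 2 : ℝ) : 𝕜) else 0) ∈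
        convexHull ℝ (kField (Fin.cons ((Y - Xs)ᴴ * Y) (fun i => (Y - Xs)ᴴ * X i)) ⊤) := by
  obtain ⟨c, hc⟩ := (Submodule.mem_span_range_iff_exists_fun 𝕜).mp hXs
  set M := Y - Xs
  have hY : Y = M + ∑ q, c q • X q := by rw [hc, sub_add_cancel]
  have htarget : (fun i : Fin (k + 1) => if i = 0 then ((specNorm M ^ 2 : ℝ) : 𝕜) else 0) =
      Fin.cons ((specNorm M ^ 2 : ℝ) : 𝕜) 0 := by
    ext i
    cases i using Fin.cases <;> simp
  have hmaxRSV : {v | v ∈ maxRSV M ∧ ‖v‖ = 1} =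
      {v ∈ {v | v ∈ (⊤ : Submodule 𝕜 _) ∧ ‖v‖ = 1} | ‖toEuclideanLin M v‖ ^ 2 = specNorm M ^ 2} := by
    ext v
    simp only [Set.mem_ofPred_eq, Submodule.mem_top, true_and]
    rw [and_comm]
    exact and_congr_right fun hv => (mem_maxRSV_iff M hv).trans
      (pow_left_inj₀ (norm_nonneg _) (specNorm_nonneg M) two_ne_zero).symm
  rw [kField_cons_eq_image, kField_eq_image, htarget, hmaxRSV, hY]
  simp_rw [inner_toEuclideanLin_conjTranspose_mul_add_sum]
  refine (cons_mem_convexHull_image_iff c _ _ fun v hv => ?_).symm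
  simpa [hv.2] using norm_toEuclideanLin_sq_le M v

theorem stmt6 {n k : ℕ} (X : Fin k → Matrix (Fin n) (Fin n) 𝕜)
    (hdim : Module.finrank 𝕜 (Submodule.span 𝕜 (Set.range X)) = k)
    (Y Xs : Matrix (Fin n) (Fin n) 𝕜)
    (hY : Y ∉ Submodule.span 𝕜 (Set.range X))
    (hXs : Xs ∈ Submodule.span 𝕜 (Set.range X)) :
    ((0 : Fin k → 𝕜) ∈
        convexHull ℝ (kField (fun i => (Y - Xs)ᴴ * X i) (maxRSV (Y - Xs)))) ↔
      (fun i : Fin (k + 1) => if i = 0 then ((specNorm (Y - Xs) ^ 2 : ℝ) : 𝕜) else 0) ∈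
        convexHull ℝ (kField (Fin.cons ((Y - Xs)ᴴ * Y) (fun i => (Y - Xs)ᴴ * X i)) ⊤) :=
  stmt6_general X Y Xs hXs
end

section
/- Let J_λ ∈ 𝔽^{n×n} (𝔽 = ℝ or ℂ) be the n×n Jordan block with eigenvalue λ (ones on the first superdiagonal), let 1 ≤ k ≤ n−1, and let 𝒳 = span{I, J_λ, …, J_λ^{k−1}}. Then X_* = J_λ^k − (J_λ − λI)^k is a spectral approximation of Y = J_λ^k from 𝒳, and the value of the approximation problem is ‖Y − X_*‖₂ = ‖J_0^k‖₂ = 1. -/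
open Matrix

variable {𝕜 : Type*} [RCLike 𝕜]

/-!
The matrix `J - λI` is the nilpotent shift `J₀`. The candidate is `X_* = p(J)` for
`p = Xᵏ - (X - λ)ᵏ`, a polynomial of degree `< k`, so `X_*` lies in `𝒳` and `Y - X_* = J₀ᵏ`.
Since `(J₀ᵏ)ᴴ J₀ᵏ` is a diagonal `0/1` projection, `J₀ᵏ` is a partial isometry of norm `1`.
For optimality, `J` vanishes above its first superdiagonal, so every `J^i` with `i < k`, and
hence every `X ∈ 𝒳`, vanishes at the entry `(0, k)`, where `Y - X_*` has entry `1`. Thus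
`Y - X` has `(0, k)` entry `1` as well, and an entry never exceeds the spectral norm.
-/

open Polynomial
open scoped Matrix.Norms.L2Operator

section SpanPowers

variable {R A : Type*} [CommRing R] [Ring A] [Algebra R A]

theorem aeval_mem_span_pow_of_natDegree_lt {p : R[X]} {k : ℕ} (hp : p.natDegree < k) (a : A) :
    aeval a p ∈ Submodule.span R (Set.range fun i : Fin k => a ^ (i : ℕ)) := by
  rw [aeval_eq_sum_range' hp]
  refine Submodule.sum_mem _ fun i hi => Submodule.smul_mem _ _ (Submodule.subset_span ?_)
  exact ⟨⟨i, Finset.mem_range.mp hi⟩, rfl⟩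

theorem pow_sub_pow_sub_smul_one_mem_span [Nontrivial R] {k : ℕ} (hk : k ≠ 0) (a : A) (c : R) :
    a ^ k - (a - c • 1) ^ k ∈ Submodule.span R (Set.range fun i : Fin k => a ^ (i : ℕ)) := by
  have hmonic : ((X - C c) ^ k).IsMonicOfDegree k := by
    simpa using (isMonicOfDegree_X_sub_one c).pow k
  have hdeg : (X ^ k - (X - C c) ^ k).natDegree < k := by
    rw [← neg_sub, natDegree_neg]
    exact hmonic.natDegree_sub_X_pow hk
  have := aeval_mem_span_pow_of_natDegree_lt hdeg a
  rwa [map_sub, map_pow, map_pow, map_sub, aeval_X, aeval_C, Algebra.algebraMap_eq_smul_one] at this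

end SpanPowers

section L2OpNorm

variable {m l : Type*} [Fintype m] [Fintype l] [DecidableEq l]

theorem specNorm_eq_l2_opNorm [DecidableEq m] (A : Matrix m m 𝕜) : specNorm A = ‖A‖ := by
  rw [specNorm, cstar_norm_def, ← ContinuousLinearMap.sSup_sphere_eq_norm]
  congr 1
  ext r
  simp only [Set.mem_ofPred_eq, Set.mem_image, mem_sphere_zero_iff_norm, eq_comm (a := r)]
  rfl

theorem norm_apply_le_l2_opNorm (A : Matrix m l 𝕜) (i : m) (j : l) : ‖A i j‖ ≤ ‖A‖ := by
  simpa [mulVec_single] using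
    (PiLp.norm_apply_le _ i).trans (A.l2_opNorm_mulVec (EuclideanSpace.single j 1))

end L2OpNorm

section Band

variable {R : Type*} [Semiring R] {n : ℕ}

variable (R n) in
def upperBandSubmodule (p : ℕ) : Submodule R (Matrix (Fin n) (Fin n) R) where
  carrier := {A | ∀ i j : Fin n, (i : ℕ) + p < j → A i j = 0}
  zero_mem' _ _ _ := rfl
  add_mem' hA hB i j h := by simp [hA i j h, hB i j h]
  smul_mem' c A hA i j h := by simp [hA i j h]

theorem upperBandSubmodule_mono {p q : ℕ} (h : p ≤ q) :
    upperBandSubmodule R n p ≤ upperBandSubmodule R n q :=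
  fun _ hA i j hij => hA i j (by omega)

theorem one_mem_upperBandSubmodule : (1 : Matrix (Fin n) (Fin n) R) ∈ upperBandSubmodule R n 0 :=
  fun i j h => one_apply_ne (fun hij => by simp [hij] at h)

theorem mul_mem_upperBandSubmodule {A B : Matrix (Fin n) (Fin n) R} {p q : ℕ}
    (hA : A ∈ upperBandSubmodule R n p) (hB : B ∈ upperBandSubmodule R n q) :
    A * B ∈ upperBandSubmodule R n (p + q) := by
  intro i j hij
  rw [mul_apply]
  refine Finset.sum_eq_zero fun l _ => ?_
  by_cases hl : (i : ℕ) + p < l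
  · rw [hA i l hl, zero_mul]
  · rw [hB l j (by omega), mul_zero]

theorem pow_mem_upperBandSubmodule {A : Matrix (Fin n) (Fin n) R}
    (hA : A ∈ upperBandSubmodule R n 1) (m : ℕ) : A ^ m ∈ upperBandSubmodule R n m := by
  induction m with
  | zero => exact one_mem_upperBandSubmodule
  | succ m ih => exact pow_succ A m ▸ mul_mem_upperBandSubmodule ih hA

theorem span_pow_le_upperBandSubmodule {A : Matrix (Fin n) (Fin n) R}
    (hA : A ∈ upperBandSubmodule R n 1) (k : ℕ) :
    Submodule.span R (Set.range fun i : Fin k => A ^ (i : ℕ)) ≤ upperBandSubmodule R n (k - 1) :=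
  Submodule.span_le.mpr <| Set.range_subset_iff.mpr fun i =>
    upperBandSubmodule_mono (by omega) (pow_mem_upperBandSubmodule hA i)

variable (R n) in
/-- The Jordan block `J₀`. -/
def shiftMatrix : Matrix (Fin n) (Fin n) R := of fun i j => if (i : ℕ) + 1 = j then 1 else 0

theorem shiftMatrix_apply (i j : Fin n) :
    shiftMatrix R n i j = if (i : ℕ) + 1 = j then 1 else 0 :=
  rfl

theorem shiftMatrix_pow_apply (m : ℕ) (i j : Fin n) :
    (shiftMatrix R n ^ m) i j = if (i : ℕ) + m = j then 1 else 0 := by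
  induction m generalizing j with
  | zero => simp [one_apply, Fin.ext_iff]
  | succ m ih =>
    rw [pow_succ, mul_apply]
    by_cases h : (i : ℕ) + m + 1 < n
    · rw [Finset.sum_eq_single ⟨(i : ℕ) + m, by omega⟩]
      · rw [ih, shiftMatrix_apply]
        simp [add_assoc]
      · intro l _ hl
        rw [ih, if_neg (fun h' => hl (Fin.ext h'.symm)), zero_mul]
      · simp
    · rw [if_neg (by omega)]
      refine Finset.sum_eq_zero fun l _ => ?_
      have := j.isLt
      rw [ih, shiftMatrix_apply]
      by_cases hl : (i : ℕ) + m = l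
      · rw [if_neg (show (l : ℕ) + 1 ≠ j by omega), mul_zero]
      · rw [if_neg hl, zero_mul]

end Band

section ShiftNorm

variable {n : ℕ}

theorem conjTranspose_shiftMatrix_pow_mul_self (m : ℕ) :
    (shiftMatrix 𝕜 n ^ m)ᴴ * shiftMatrix 𝕜 n ^ m =
      diagonal fun j : Fin n => if m ≤ (j : ℕ) then (1 : 𝕜) else 0 := by
  ext i j
  rw [mul_apply, diagonal_apply]
  simp only [conjTranspose_apply, shiftMatrix_pow_apply, apply_ite (star : 𝕜 → 𝕜), star_one,
    star_zero]
  by_cases hij : i = j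
  · subst hij
    by_cases hm : m ≤ (i : ℕ)
    · rw [Finset.sum_eq_single ⟨i - m, by omega⟩]
      · simp [Nat.sub_add_cancel hm, hm]
      · intro l _ hl
        rw [if_neg (fun h => hl (Fin.ext (by simp; omega))), zero_mul]
      · simp
    · rw [if_pos rfl, if_neg hm]
      refine Finset.sum_eq_zero fun l _ => ?_
      rw [if_neg (by omega), zero_mul]
  · rw [if_neg hij]
    refine Finset.sum_eq_zero fun l _ => ?_
    by_cases hli : (l : ℕ) + m = i
    · rw [if_pos hli, if_neg (fun hlj => hij (Fin.ext (hli.symm.trans hlj))), mul_zero]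
    · rw [if_neg hli, zero_mul]

theorem l2_opNorm_shiftMatrix_pow {m : ℕ} (hm : m < n) : ‖shiftMatrix 𝕜 n ^ m‖ = 1 := by
  have h := l2_opNorm_conjTranspose_mul_self (shiftMatrix 𝕜 n ^ m)
  rw [conjTranspose_shiftMatrix_pow_mul_self, l2_opNorm_diagonal] at h
  have hdiag : ‖fun j : Fin n => if m ≤ (j : ℕ) then (1 : 𝕜) else 0‖ = 1 := by
    refine le_antisymm ((pi_norm_le_iff_of_nonneg zero_le_one).mpr fun j => ?_) ?_
    · split_ifs <;> simp
    · simpa [show m ≤ n - 1 by omega] using norm_le_pi_norm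
        (fun j : Fin n => if m ≤ (j : ℕ) then (1 : 𝕜) else 0) ⟨n - 1, by omega⟩
  rw [hdiag, ← sq, eq_comm, pow_eq_one_iff_of_nonneg (norm_nonneg _) two_ne_zero] at h
  exact h

section JordanBlock

variable {n : ℕ} {lam : 𝕜} {J : Matrix (Fin n) (Fin n) 𝕜}

theorem sub_smul_one_eq_shiftMatrix_of_jordan
    (hJ : ∀ i j : Fin n, J i j = if (i : ℕ) + 1 = j then 1 else if i = j then lam else 0) :
    J - lam • 1 = shiftMatrix 𝕜 n := by
  ext i j
  rw [Matrix.sub_apply, Matrix.smul_apply, one_apply, hJ, shiftMatrix_apply]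
  by_cases h1 : (i : ℕ) + 1 = j
  · have h2 : i ≠ j := by rintro rfl; omega
    simp [h1, h2]
  · by_cases h2 : i = j <;> simp [h1, h2]

theorem mem_upperBandSubmodule_one_of_jordan
    (hJ : ∀ i j : Fin n, J i j = if (i : ℕ) + 1 = j then 1 else if i = j then lam else 0) :
    J ∈ upperBandSubmodule 𝕜 n 1 := fun i j hij => by
  rw [hJ, if_neg (by omega), if_neg (by rintro rfl; omega)]

end JordanBlock

theorem stmt10 {n k : ℕ} (hk : 1 ≤ k) (hkn : k ≤ n - 1) (lam : 𝕜)
    (J : Matrix (Fin n) (Fin n) 𝕜)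
    (hJ : ∀ i j : Fin n, J i j =
      if (i : ℕ) + 1 = (j : ℕ) then 1 else if i = j then lam else 0) :
    IsSpectralApprox (Submodule.span 𝕜 (Set.range fun i : Fin k => J ^ (i : ℕ)))
        (J ^ k) (J ^ k - (J - lam • 1) ^ k) ∧
      specNorm (J ^ k - (J ^ k - (J - lam • 1) ^ k)) = 1 := by
  have hkn' : k < n := by omega
  have hXs := pow_sub_pow_sub_smul_one_mem_span (k := k) (by omega) J lam
  rw [sub_smul_one_eq_shiftMatrix_of_jordan hJ] at hXs ⊢
  have hnorm : specNorm (J ^ k - (J ^ k - shiftMatrix 𝕜 n ^ k)) = 1 := by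
    rw [sub_sub_cancel, specNorm_eq_l2_opNorm, l2_opNorm_shiftMatrix_pow hkn']
  refine ⟨⟨hXs, fun X hX => ?_⟩, hnorm⟩
  let i₀ : Fin n := ⟨0, by omega⟩
  let j₀ : Fin n := ⟨k, hkn'⟩
  have hentry : (J ^ k - X) i₀ j₀ = 1 := by
    have hX_band := span_pow_le_upperBandSubmodule (mem_upperBandSubmodule_one_of_jordan hJ) k
      (sub_mem hXs hX)
    rw [← sub_add_sub_cancel _ (J ^ k - shiftMatrix 𝕜 n ^ k), sub_sub_cancel, Matrix.add_apply,
      shiftMatrix_pow_apply, hX_band i₀ j₀ (by simp [i₀, j₀]; omega)]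
    simp [i₀, j₀]
  rw [hnorm, specNorm_eq_l2_opNorm]
  simpa [hentry] using norm_apply_le_l2_opNorm (J ^ k - X) i₀ j₀
end ShiftNorm
end

section
/- Let 𝒳 = span{X_1, …, X_k} ⊂ ℝ^{n×n} be a k-dimensional subspace, Y ∈ ℝ^{n×n} \ 𝒳, and let X_* ∈ 𝒳 be a spectral approximation of Y with σ₁ = ‖Y − X_*‖₂. Suppose v_1, …, v_ℓ are unit maximal right singular vectors of Y − X_* with corresponding maximal left singular vectors u_1, …, u_ℓ (i.e., (Y − X_*)v_j = σ₁ u_j), and ω_1, …, ω_ℓ are positive reals with ω_1 + … + ω_ℓ = 1 such that Σ_j ω_j u_jᵀ X v_j = 0 for all X ∈ 𝒳. Set U = [u_1, …, u_ℓ], V = [v_1, …, v_ℓ], Λ = ½ diag(ω_1, …, ω_ℓ), B = VΛUᵀ, and Z = [[UΛUᵀ, UΛVᵀ], [VΛUᵀ, VΛVᵀ]] ∈ ℝ^{2n×2n}. Then Z is symmetric positive semidefinite with trace(Z) = 1, trace(B X_i) = 0 for i = 1, …, k, and trace(B Y) = σ₁/2. -/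
open Matrix

variable {𝕜 : Type*} [RCLike 𝕜]

/-! With `Λ = ½ diag ω` and `W = [U; V]`, the block matrix is the congruence `Z = W Λ Wᵀ` of a
nonnegative diagonal matrix, hence positive semidefinite. All traces reduce to column sums,
`trace (V D Uᵀ M) = ∑ⱼ dⱼ uⱼᵀ M vⱼ`: this makes `trace Z = ½ ∑ ω (‖u‖² + ‖v‖²) = 1`, makes
`trace (B X)` half the orthogonality sum, which vanishes on `𝒳`, and gives
`trace (B (Y - X_*)) = ½ ∑ ωⱼ σ₁ ‖uⱼ‖² = σ₁ / 2`. Here `‖uⱼ‖ = 1` because `σ₁ > 0`, as `Y ∉ 𝒳`. -/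

section SpectralNorm

variable {m : Type*} [Fintype m] [DecidableEq m]

lemma norm_toEuclideanLin_le_specNorm (A : Matrix m m 𝕜) {v : EuclideanSpace 𝕜 m}
    (hv : ‖v‖ = 1) : ‖toEuclideanLin A v‖ ≤ specNorm A := by
  refine le_csSup ⟨‖(toEuclideanLin A).toContinuousLinearMap‖, ?_⟩ ⟨v, hv, rfl⟩
  rintro r ⟨w, hw, rfl⟩
  simpa [hw] using (toEuclideanLin A).toContinuousLinearMap.le_opNorm w

lemma specNorm_pos {A : Matrix m m 𝕜} (hA : A ≠ 0) : 0 < specNorm A := by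
  obtain ⟨w, hw⟩ : ∃ w, toEuclideanLin A w ≠ 0 := by
    by_contra! h
    exact hA (toEuclideanLin.injective (LinearMap.ext fun w => by simpa using h w))
  have hw0 : w ≠ 0 := by rintro rfl; simp at hw
  calc 0 < ‖toEuclideanLin A (‖w‖⁻¹ • w)‖ := by simp [hw, hw0]
    _ ≤ specNorm A := norm_toEuclideanLin_le_specNorm A (norm_smul_inv_norm hw0)

end SpectralNorm

namespace Matrix

variable {R m ι : Type*} [CommRing R] [Fintype m] [Fintype ι] [DecidableEq ι]

lemma trace_fromBlocks (A B C D : Matrix m m R) :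
    (fromBlocks A B C D).trace = A.trace + D.trace := by
  simp [trace, Fintype.sum_sum_type]

lemma trace_mul_diagonal_mul_transpose (U V : Matrix m ι R) (d : ι → R) :
    (U * diagonal d * Vᵀ).trace = ∑ j, d j * (Uᵀ j ⬝ᵥ Vᵀ j) := by
  simp only [trace, diag, mul_apply (M := U * diagonal d), mul_diagonal, transpose_apply,
    dotProduct, Finset.mul_sum]
  rw [Finset.sum_comm]
  simp only [mul_comm, mul_left_comm]

lemma posSemidef_fromBlocks_mul_diagonal_mul_transpose [PartialOrder R] [StarRing R]
    [StarOrderedRing R] [TrivialStar R] (U V : Matrix m ι R) {d : ι → R}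
    (hd : 0 ≤ d) :
    (fromBlocks (U * diagonal d * Uᵀ) (U * diagonal d * Vᵀ) (V * diagonal d * Uᵀ)
      (V * diagonal d * Vᵀ)).PosSemidef := by
  rw [← fromRows_mul_fromCols, ← transpose_fromRows, ← fromRows_mul,
    ← conjTranspose_eq_transpose_of_trivial]
  exact (posSemidef_diagonal_iff.mpr hd).mul_mul_conjTranspose_same _

end Matrix

namespace EuclideanSpace

variable {m ι : Type*} [Fintype m] [Fintype ι] [DecidableEq ι]

lemma trace_mul_diagonal_mul_transpose_mul [DecidableEq m] (u v : ι → EuclideanSpace ℝ m)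
    (d : ι → ℝ) (M : Matrix m m ℝ) :
    ((of fun i j => v j i) * diagonal d * (of fun i j => u j i)ᵀ * M).trace =
      ∑ j, d j * inner ℝ (u j) (toEuclideanLin M (v j)) := by
  rw [trace_mul_comm, ← Matrix.mul_assoc, ← Matrix.mul_assoc, trace_mul_diagonal_mul_transpose]
  refine Finset.sum_congr rfl fun j _ => congrArg (d j * ·) ?_
  simp [inner_eq_star_dotProduct, dotProduct, mulVec, mul_apply, mul_comm]

lemma trace_mul_diagonal_mul_transpose_self (u : ι → EuclideanSpace ℝ m) (d : ι → ℝ) :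
    ((of fun i j => u j i) * diagonal d * (of fun i j => u j i)ᵀ).trace =
      ∑ j, d j * ‖u j‖ ^ 2 := by
  rw [trace_mul_diagonal_mul_transpose]
  refine Finset.sum_congr rfl fun j _ => congrArg (d j * ·) ?_
  rw [← real_inner_self_eq_norm_sq, inner_eq_star_dotProduct]
  simp [dotProduct]

end EuclideanSpace

theorem stmt11_general {n k ℓ : ℕ} (X : Fin k → Matrix (Fin n) (Fin n) ℝ)
    (Y Xs : Matrix (Fin n) (Fin n) ℝ)
    (hY : Y ∉ Submodule.span ℝ (Set.range X))
    (happrox : IsSpectralApprox (Submodule.span ℝ (Set.range X)) Y Xs)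
    (u v : Fin ℓ → EuclideanSpace ℝ (Fin n))
    (hv1 : ∀ j, ‖v j‖ = 1)
    (hvmax : ∀ j, ‖Matrix.toEuclideanLin (Y - Xs) (v j)‖ = specNorm (Y - Xs))
    (hu : ∀ j, Matrix.toEuclideanLin (Y - Xs) (v j) = specNorm (Y - Xs) • u j)
    (ω : Fin ℓ → ℝ) (hω : ∀ j, 0 < ω j) (hωs : ∑ j, ω j = 1)
    (horth : ∀ W ∈ Submodule.span ℝ (Set.range X),
      ∑ j, ω j * (inner ℝ (u j) (Matrix.toEuclideanLin W (v j)) : ℝ) = 0)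
    (U V : Matrix (Fin n) (Fin ℓ) ℝ)
    (hU : U = Matrix.of fun i j => u j i) (hV : V = Matrix.of fun i j => v j i)
    (Λ : Matrix (Fin ℓ) (Fin ℓ) ℝ) (hΛ : Λ = (1 / 2 : ℝ) • Matrix.diagonal ω)
    (B : Matrix (Fin n) (Fin n) ℝ) (hB : B = V * Λ * Uᵀ)
    (Z : Matrix (Fin n ⊕ Fin n) (Fin n ⊕ Fin n) ℝ)
    (hZ : Z = Matrix.fromBlocks (U * Λ * Uᵀ) (U * Λ * Vᵀ) (V * Λ * Uᵀ) (V * Λ * Vᵀ)) :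
    Zᵀ = Z ∧ Z.PosSemidef ∧ Z.trace = 1 ∧
      (∀ i, (B * X i).trace = 0) ∧ (B * Y).trace = specNorm (Y - Xs) / 2 := by
  set σ := specNorm (Y - Xs)
  have hσ : 0 < σ := specNorm_pos (sub_ne_zero.mpr fun h => hY (h ▸ happrox.1))
  have hu1 (j : Fin ℓ) : ‖u j‖ = 1 := by
    have h := hvmax j
    rw [hu j, norm_smul, Real.norm_of_nonneg hσ.le] at h
    exact (mul_eq_left₀ hσ.ne').mp h
  have hΛd : Λ = diagonal fun j => ω j / 2 := by
    rw [hΛ, ← diagonal_smul]; congr 1; ext j; simp [div_eq_inv_mul]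
  have htrace (M : Matrix (Fin n) (Fin n) ℝ) :
      (B * M).trace = (∑ j, ω j * inner ℝ (u j) (toEuclideanLin M (v j))) / 2 := by
    simp only [hB, hΛd, hU, hV, EuclideanSpace.trace_mul_diagonal_mul_transpose_mul,
      Finset.sum_div, div_mul_eq_mul_div]
  have hzero : ∀ W ∈ Submodule.span ℝ (Set.range X), (B * W).trace = 0 := fun W hW => by
    rw [htrace, horth W hW, zero_div]
  have hpsd : Z.PosSemidef := by
    rw [hZ, hΛd]
    exact posSemidef_fromBlocks_mul_diagonal_mul_transpose U V
      fun j => div_nonneg (hω j).le zero_le_two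
  refine ⟨?_, hpsd, ?_, fun i => hzero _ (Submodule.subset_span ⟨i, rfl⟩), ?_⟩
  · rw [← conjTranspose_eq_transpose_of_trivial, hpsd.isHermitian.eq]
  · simp only [hZ, trace_fromBlocks, hΛd, hU, hV,
      EuclideanSpace.trace_mul_diagonal_mul_transpose_self, hu1, hv1]
    simp only [one_pow, mul_one, ← Finset.sum_div, hωs]
    norm_num
  · have hinner (j : Fin ℓ) : inner ℝ (u j) (toEuclideanLin (Y - Xs) (v j)) = σ := by
      rw [hu j, real_inner_smul_right, real_inner_self_eq_norm_sq, hu1 j, one_pow, mul_one]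
    calc (B * Y).trace = (B * (Y - Xs)).trace + (B * Xs).trace := by
          rw [Matrix.mul_sub, trace_sub, sub_add_cancel]
      _ = σ / 2 := by
          rw [hzero Xs happrox.1, add_zero, htrace]
          simp only [hinner, ← Finset.sum_mul, hωs, one_mul]

theorem stmt11 {n k ℓ : ℕ} (X : Fin k → Matrix (Fin n) (Fin n) ℝ)
    (hdim : Module.finrank ℝ (Submodule.span ℝ (Set.range X)) = k)
    (Y Xs : Matrix (Fin n) (Fin n) ℝ)
    (hY : Y ∉ Submodule.span ℝ (Set.range X))
    (happrox : IsSpectralApprox (Submodule.span ℝ (Set.range X)) Y Xs)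
    (u v : Fin ℓ → EuclideanSpace ℝ (Fin n))
    (hv1 : ∀ j, ‖v j‖ = 1)
    (hvmax : ∀ j, ‖Matrix.toEuclideanLin (Y - Xs) (v j)‖ = specNorm (Y - Xs))
    (hu : ∀ j, Matrix.toEuclideanLin (Y - Xs) (v j) = specNorm (Y - Xs) • u j)
    (ω : Fin ℓ → ℝ) (hω : ∀ j, 0 < ω j) (hωs : ∑ j, ω j = 1)
    (horth : ∀ W ∈ Submodule.span ℝ (Set.range X),
      ∑ j, ω j * (inner ℝ (u j) (Matrix.toEuclideanLin W (v j)) : ℝ) = 0)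
    (U V : Matrix (Fin n) (Fin ℓ) ℝ)
    (hU : U = Matrix.of fun i j => u j i) (hV : V = Matrix.of fun i j => v j i)
    (Λ : Matrix (Fin ℓ) (Fin ℓ) ℝ) (hΛ : Λ = (1 / 2 : ℝ) • Matrix.diagonal ω)
    (B : Matrix (Fin n) (Fin n) ℝ) (hB : B = V * Λ * Uᵀ)
    (Z : Matrix (Fin n ⊕ Fin n) (Fin n ⊕ Fin n) ℝ)
    (hZ : Z = Matrix.fromBlocks (U * Λ * Uᵀ) (U * Λ * Vᵀ) (V * Λ * Uᵀ) (V * Λ * Vᵀ)) :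
    Zᵀ = Z ∧ Z.PosSemidef ∧ Z.trace = 1 ∧
      (∀ i, (B * X i).trace = 0) ∧ (B * Y).trace = specNorm (Y - Xs) / 2 :=
  stmt11_general X Y Xs hY happrox u v hv1 hvmax hu ω hω hωs horth U V hU hV Λ hΛ B hB Z hZ
end
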